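/- arXiv:0905.0961 — 2 statements merged into one kernel-verified Lean document; each statement's English description precedes it below -/
import Mathlib

section
/- Let T be self-adjoint in H, m > 0, λ₀ ∈ (−∞, −m] ∪ [m, ∞), ν₀ = √(λ₀² − m²), and suppose {ψₙ} ⊂ D(T) satisfies ‖ψₙ‖ = 1 and ‖(T − ν₀)ψₙ‖ → 0. Choose a, b ∈ ℝ with a² + b² = 1 and [[m, ν₀], [ν₀, −m]](a,b) = λ₀(a,b), and set fₙ = (aψₙ, bψₙ). Then ‖fₙ‖ = 1 and ‖(H − λ₀)fₙ‖² = ‖(T − ν₀)ψₙ‖² → 0 as n → ∞, where H = [[m, T], [T, −m]]. -/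
open Filter

/-- Weyl-sequence construction: if `T` is self-adjoint, `m > 0`,
`|λ₀| ≥ m`, `ν₀ = √(λ₀² - m²)`, `ψₙ ∈ D(T)` is normalized with `‖(T - ν₀)ψₙ‖ → 0`, and
`(a, b)` is a unit eigenvector of `[[m, ν₀], [ν₀, -m]]` for the eigenvalue `λ₀`, then
`fₙ = (aψₙ, bψₙ)` satisfies `‖fₙ‖ = 1` and
`‖(H - λ₀)fₙ‖² = ‖(T - ν₀)ψₙ‖² → 0`, where `H = [[m, T], [T, -m]]`. -/
theorem dirac_weyl_sequence
    {H : Type*} [NormedAddCommGroup H] [InnerProductSpace ℂ H] [CompleteSpace H]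
    (T : H →ₗ.[ℂ] H) (hT : IsSelfAdjoint T) (m lam₀ ν₀ : ℝ) (hm : 0 < m)
    (hlam : m ≤ |lam₀|) (hν : ν₀ = Real.sqrt (lam₀ ^ 2 - m ^ 2))
    (ψ : ℕ → T.domain) (hnorm : ∀ n, ‖(ψ n : H)‖ = 1)
    (hconv : Tendsto (fun n => ‖T (ψ n) - (ν₀ : ℂ) • (ψ n : H)‖) atTop (nhds 0))
    (a b : ℝ) (hab : a ^ 2 + b ^ 2 = 1)
    (heig1 : m * a + ν₀ * b = lam₀ * a) (heig2 : ν₀ * a - m * b = lam₀ * b) :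
    (∀ n, ‖(a : ℂ) • (ψ n : H)‖ ^ 2 + ‖(b : ℂ) • (ψ n : H)‖ ^ 2 = 1) ∧
    (∀ n,
      ‖T ((b : ℂ) • ψ n) + (m : ℂ) • ((a : ℂ) • (ψ n : H))
          - (lam₀ : ℂ) • ((a : ℂ) • (ψ n : H))‖ ^ 2
        + ‖T ((a : ℂ) • ψ n) - (m : ℂ) • ((b : ℂ) • (ψ n : H))
          - (lam₀ : ℂ) • ((b : ℂ) • (ψ n : H))‖ ^ 2
        = ‖T (ψ n) - (ν₀ : ℂ) • (ψ n : H)‖ ^ 2) ∧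
    Tendsto (fun n =>
      ‖T ((b : ℂ) • ψ n) + (m : ℂ) • ((a : ℂ) • (ψ n : H))
          - (lam₀ : ℂ) • ((a : ℂ) • (ψ n : H))‖ ^ 2
        + ‖T ((a : ℂ) • ψ n) - (m : ℂ) • ((b : ℂ) • (ψ n : H))
          - (lam₀ : ℂ) • ((b : ℂ) • (ψ n : H))‖ ^ 2) atTop (nhds 0) := by
  have hc1 : (m : ℂ) * a - (lam₀ : ℂ) * a = -((ν₀ : ℂ) * b) := by
    have : m * a - lam₀ * a = -(ν₀ * b) := by linarith
    exact_mod_cast this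
  have hc2 : -((m : ℂ) * b) - (lam₀ : ℂ) * b = -((ν₀ : ℂ) * a) := by
    have : -(m * b) - lam₀ * b = -(ν₀ * a) := by linarith
    exact_mod_cast this
  have key : ∀ n,
      ‖T ((b : ℂ) • ψ n) + (m : ℂ) • ((a : ℂ) • (ψ n : H))
          - (lam₀ : ℂ) • ((a : ℂ) • (ψ n : H))‖ ^ 2
        + ‖T ((a : ℂ) • ψ n) - (m : ℂ) • ((b : ℂ) • (ψ n : H))
          - (lam₀ : ℂ) • ((b : ℂ) • (ψ n : H))‖ ^ 2
        = ‖T (ψ n) - (ν₀ : ℂ) • (ψ n : H)‖ ^ 2 := by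
    intro n
    have hb : T ((b : ℂ) • ψ n) = (b : ℂ) • T (ψ n) := T.map_smul _ _
    have ha : T ((a : ℂ) • ψ n) = (a : ℂ) • T (ψ n) := T.map_smul _ _
    have e1 : T ((b : ℂ) • ψ n) + (m : ℂ) • ((a : ℂ) • (ψ n : H))
        - (lam₀ : ℂ) • ((a : ℂ) • (ψ n : H))
        = (b : ℂ) • (T (ψ n) - (ν₀ : ℂ) • (ψ n : H)) := by
      rw [hb]
      match_scalars
      · ring
      · linear_combination hc1
    have e2 : T ((a : ℂ) • ψ n) - (m : ℂ) • ((b : ℂ) • (ψ n : H))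
        - (lam₀ : ℂ) • ((b : ℂ) • (ψ n : H))
        = (a : ℂ) • (T (ψ n) - (ν₀ : ℂ) • (ψ n : H)) := by
      rw [ha]
      match_scalars
      · ring
      · linear_combination hc2
    rw [e1, e2, norm_smul, norm_smul, Complex.norm_real, Complex.norm_real,
      mul_pow, mul_pow, ← add_mul, Real.norm_eq_abs, Real.norm_eq_abs, sq_abs, sq_abs]
    rw [add_comm (b ^ 2) (a ^ 2), hab, one_mul]
  refine ⟨?_, key, ?_⟩
  · intro n
    rw [norm_smul, norm_smul, Complex.norm_real, Complex.norm_real, hnorm,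
      mul_one, mul_one, Real.norm_eq_abs, Real.norm_eq_abs, sq_abs, sq_abs, hab]
  · have := hconv.pow 2
    simp only [ne_eq, OfNat.ofNat_ne_zero, not_false_eq_true, zero_pow] at this
    exact this.congr fun n => (key n).symm
end

section
/- The Loss–Yau spinor φ(x) = ⟨x⟩⁻³(I₂ + i σ·x)φ₀, with φ₀ = (1,0)ᵀ and ⟨x⟩ = √(1+|x|²), is a zero mode of the Weyl–Dirac operator σ·(D − A(x)) with the vector potential A(x) = 3⟨x⟩⁻⁴{(1−|x|²)w₀ + 2(w₀·x)x + 2 w₀×x}, where w₀ = (⟨φ₀, σ₁φ₀⟩, ⟨φ₀, σ₂φ₀⟩, ⟨φ₀, σ₃φ₀⟩); that is, σ·Dφ = (σ·A)φ pointwise on ℝ³. -/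
open Matrix
noncomputable section

/-- The Pauli matrices `σ₁, σ₂, σ₃`. -/
def pauli : Fin 3 → Matrix (Fin 2) (Fin 2) ℂ :=
  ![!![0, 1; 1, 0], !![0, -Complex.I; Complex.I, 0], !![1, 0; 0, -1]]

/-- The fixed spinor `φ₀ = (1, 0)ᵀ`. -/
def phi0 : Fin 2 → ℂ := ![1, 0]

/-- `w₀ = (⟨φ₀, σ₁φ₀⟩, ⟨φ₀, σ₂φ₀⟩, ⟨φ₀, σ₃φ₀⟩)`. -/
def w0 : Fin 3 → ℂ := fun j => dotProduct (star phi0) ((pauli j).mulVec phi0)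

/-- A point of `ℝ³` viewed as a complex vector. -/
def xc (x : EuclideanSpace ℝ (Fin 3)) : Fin 3 → ℂ := fun j => (x j : ℂ)

/-- The cross product on `ℂ³`. -/
def cross3 (a b : Fin 3 → ℂ) : Fin 3 → ℂ :=
  ![a 1 * b 2 - a 2 * b 1, a 2 * b 0 - a 0 * b 2, a 0 * b 1 - a 1 * b 0]

/-- The Loss–Yau vector potential
`A(x) = 3⟨x⟩⁻⁴ {(1 - |x|²) w₀ + 2 (w₀·x) x + 2 w₀ × x}`. -/
def lossYauA (x : EuclideanSpace ℝ (Fin 3)) : Fin 3 → ℂ := fun j =>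
  ((3 * ((1 + ‖x‖ ^ 2) ^ 2)⁻¹ : ℝ) : ℂ) *
    ((1 - (‖x‖ : ℂ) ^ 2) * w0 j + 2 * (∑ k, w0 k * xc x k) * xc x j
      + 2 * cross3 w0 (xc x) j)

/-- The Loss–Yau spinor `φ(x) = ⟨x⟩⁻³ (I₂ + i σ·x) φ₀`. -/
def lossYauSpinor (x : EuclideanSpace ℝ (Fin 3)) : Fin 2 → ℂ :=
  ((Real.sqrt (1 + ‖x‖ ^ 2))⁻¹ ^ 3 : ℝ) •
    ((1 : Matrix (Fin 2) (Fin 2) ℂ) + Complex.I • (∑ j, xc x j • pauli j)).mulVec phi0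

/-!
Write `φ(x) = ⟨x⟩⁻³ ψ(x)` with `ψ(x) = (1 + iσ·x)φ₀`; both sides of the identity equal
`3⟨x⟩⁻² φ(x)`.

Left side: by the Leibniz rule `σ·D(sψ) = s σ·Dψ - i (σ·∇s) ψ`, where `σ·Dψ = 3φ₀` because
`σⱼ² = 1`, and `∇⟨x⟩⁻³ = -3⟨x⟩⁻⁵ x`; the anticommutation relation `(σ·x)² = |x|²` then
collapses everything onto `ψ(x)`.

Right side: the bracket defining `A(x)` is the spin density `⟨ψ, σψ⟩` of `ψ(x)` (just as `w₀`
is that of `φ₀`), so `A = 3⟨x⟩⁻⁴ ⟨ψ, σψ⟩`. The Fierz identity `(σ·⟨ψ, σψ⟩)ψ = |ψ|² ψ` and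
`|ψ(x)|² = ⟨x⟩² |φ₀|²` give `(σ·A)φ = 3⟨x⟩⁻² φ`.
-/

section JapaneseBracket

variable {E : Type*} [NormedAddCommGroup E]

def japaneseBracket (x : E) : ℝ := Real.sqrt (1 + ‖x‖ ^ 2)

lemma japaneseBracket_pos (x : E) : 0 < japaneseBracket x := Real.sqrt_pos.2 (by positivity)

lemma japaneseBracket_sq (x : E) : japaneseBracket x ^ 2 = 1 + ‖x‖ ^ 2 :=
  Real.sq_sqrt (by positivity)

variable [InnerProductSpace ℝ E]

lemma hasFDerivAt_japaneseBracket (x : E) :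
    HasFDerivAt japaneseBracket ((japaneseBracket x)⁻¹ • innerSL ℝ x) x := by
  refine (((hasFDerivAt_id x).norm_sq.const_add 1).sqrt (by positivity)).congr_fderiv ?_
  ext v
  simp only [_root_.smul_apply, coe_innerSL_apply, ContinuousLinearMap.comp_id,
    nsmul_eq_mul, Nat.cast_ofNat, smul_eq_mul, id_eq, japaneseBracket]
  field_simp

lemma hasFDerivAt_japaneseBracket_inv_pow (n : ℕ) (x : E) :
    HasFDerivAt (fun y => (japaneseBracket y)⁻¹ ^ n)
      (innerSL ℝ ((-(n : ℝ) * (japaneseBracket x)⁻¹ ^ (n + 2)) • x)) x := by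
  have hx := (japaneseBracket_pos x).ne'
  refine (((hasDerivAt_inv hx).pow n).comp_hasFDerivAt x
    (hasFDerivAt_japaneseBracket x)).congr_fderiv ?_
  ext v
  rcases n with _ | n
  · simp
  · simp only [Nat.cast_add, Nat.cast_one, add_tsub_cancel_right, inv_pow, mul_neg, neg_smul,
      _root_.neg_apply, _root_.smul_apply, coe_innerSL_apply, smul_eq_mul,
      map_smul]
    field_simp
    ring

end JapaneseBracket

def pauliDot (v : Fin 3 → ℂ) : Matrix (Fin 2) (Fin 2) ℂ := ∑ j, v j • pauli j

lemma pauliDot_smul (c : ℂ) (v : Fin 3 → ℂ) : pauliDot (c • v) = c • pauliDot v := by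
  simp [pauliDot, Finset.smul_sum, smul_smul]

lemma pauli_mul_self (j : Fin 3) : pauli j * pauli j = 1 := by
  fin_cases j <;> ext a b <;> fin_cases a <;> fin_cases b <;>
    simp [pauli, Matrix.mul_apply, Fin.sum_univ_two]

lemma pauliDot_mul_self (v : Fin 3 → ℂ) : pauliDot v * pauliDot v = (∑ j, v j ^ 2) • 1 := by
  ext a b
  fin_cases a <;> fin_cases b <;>
    simp [pauliDot, pauli, Matrix.mul_apply, Fin.sum_univ_two, Fin.sum_univ_three] <;>
    ring_nf <;> simp [Complex.I_sq]

def spinDensity (ψ : Fin 2 → ℂ) : Fin 3 → ℂ := fun j => star ψ ⬝ᵥ pauli j *ᵥ ψ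

lemma pauliDot_spinDensity_mulVec (ψ : Fin 2 → ℂ) :
    pauliDot (spinDensity ψ) *ᵥ ψ = (star ψ ⬝ᵥ ψ) • ψ := by
  ext a
  fin_cases a <;>
    simp [pauliDot, spinDensity, pauli, Matrix.mulVec, dotProduct, Fin.sum_univ_two,
      Fin.sum_univ_three] <;>
    ring_nf <;> simp [Complex.I_sq]

lemma xc_smul (c : ℝ) (x : EuclideanSpace ℝ (Fin 3)) : xc (c • x) = (c : ℂ) • xc x := by
  ext j
  simp [xc]

lemma sum_xc_sq (x : EuclideanSpace ℝ (Fin 3)) : ∑ j, xc x j ^ 2 = (‖x‖ : ℂ) ^ 2 := by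
  simp only [xc]
  exact_mod_cast (EuclideanSpace.real_norm_sq_eq x).symm

def lossYauNumerator (φ : Fin 2 → ℂ) (x : EuclideanSpace ℝ (Fin 3)) : Fin 2 → ℂ :=
  (1 + Complex.I • pauliDot (xc x)) *ᵥ φ

lemma lossYauSpinor_eq :
    lossYauSpinor = fun y => (japaneseBracket y)⁻¹ ^ 3 • lossYauNumerator phi0 y := rfl

lemma star_lossYauNumerator_dotProduct_self (φ : Fin 2 → ℂ) (x : EuclideanSpace ℝ (Fin 3)) :
    star (lossYauNumerator φ x) ⬝ᵥ lossYauNumerator φ x =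
      (1 + (‖x‖ : ℂ) ^ 2) * (star φ ⬝ᵥ φ) := by
  rw [← sum_xc_sq]
  simp [lossYauNumerator, pauliDot, pauli, xc, Matrix.mulVec, dotProduct, Fin.sum_univ_two,
      Fin.sum_univ_three]
  ring_nf
  simp [Complex.I_sq]
  ring

lemma spinDensity_lossYauNumerator (φ : Fin 2 → ℂ) (x : EuclideanSpace ℝ (Fin 3)) (j : Fin 3) :
    spinDensity (lossYauNumerator φ x) j =
      (1 - (‖x‖ : ℂ) ^ 2) * spinDensity φ j + 2 * (∑ k, spinDensity φ k * xc x k) * xc x j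
        + 2 * cross3 (spinDensity φ) (xc x) j := by
  rw [← sum_xc_sq]
  fin_cases j <;>
    simp [spinDensity, cross3, lossYauNumerator, pauliDot, pauli, xc, Matrix.mulVec, dotProduct,
      Fin.sum_univ_two, Fin.sum_univ_three] <;>
    ring_nf <;> simp [Complex.I_sq] <;> ring

lemma pauliDot_mulVec_lossYauNumerator (φ : Fin 2 → ℂ) (x : EuclideanSpace ℝ (Fin 3)) :
    pauliDot (xc x) *ᵥ lossYauNumerator φ x =
      pauliDot (xc x) *ᵥ φ + (Complex.I * (‖x‖ : ℂ) ^ 2) • φ := by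
  rw [lossYauNumerator, Matrix.mulVec_mulVec, Matrix.mul_add, Matrix.mul_one, Matrix.mul_smul,
    pauliDot_mul_self, sum_xc_sq, Matrix.add_mulVec, Matrix.smul_mulVec, Matrix.smul_mulVec,
    Matrix.one_mulVec, smul_smul]

lemma lossYauNumerator_eq_add_sum (φ : Fin 2 → ℂ) :
    lossYauNumerator φ = fun y => φ + ∑ j, y j • (Complex.I • pauli j *ᵥ φ) := by
  ext y i
  fin_cases i <;>
    simp [lossYauNumerator, pauliDot, Matrix.add_mulVec, Matrix.smul_mulVec, xc,
      Fin.sum_univ_three] <;>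
    ring

lemma hasFDerivAt_lossYauNumerator (φ : Fin 2 → ℂ) (x : EuclideanSpace ℝ (Fin 3)) :
    HasFDerivAt (lossYauNumerator φ)
      (∑ j, (EuclideanSpace.proj (𝕜 := ℝ) j).smulRight (Complex.I • pauli j *ᵥ φ)) x := by
  rw [lossYauNumerator_eq_add_sum]
  exact (HasFDerivAt.fun_sum fun j _ =>
    (EuclideanSpace.proj (𝕜 := ℝ) j).hasFDerivAt.smul_const _).const_add φ

lemma fderiv_lossYauNumerator_single (φ : Fin 2 → ℂ) (x : EuclideanSpace ℝ (Fin 3)) (j : Fin 3) :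
    fderiv ℝ (lossYauNumerator φ) x (EuclideanSpace.single j 1) = Complex.I • pauli j *ᵥ φ := by
  simp [(hasFDerivAt_lossYauNumerator φ x).fderiv]

def weylDirac (f : EuclideanSpace ℝ (Fin 3) → Fin 2 → ℂ) (x : EuclideanSpace ℝ (Fin 3)) :
    Fin 2 → ℂ :=
  ∑ j, pauli j *ᵥ ((-Complex.I) • fderiv ℝ f x (EuclideanSpace.single j 1))

lemma weylDirac_smul {s : EuclideanSpace ℝ (Fin 3) → ℝ} {f : EuclideanSpace ℝ (Fin 3) → Fin 2 → ℂ}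
    {g x : EuclideanSpace ℝ (Fin 3)} {f' : EuclideanSpace ℝ (Fin 3) →L[ℝ] Fin 2 → ℂ}
    (hs : HasFDerivAt s (innerSL ℝ g) x) (hf : HasFDerivAt f f' x) :
    weylDirac (fun y => s y • f y) x =
      s x • weylDirac f x - Complex.I • pauliDot (xc g) *ᵥ f x := by
  have hsf : HasFDerivAt (fun y => s y • f y) (s x • f' + (innerSL ℝ g).smulRight (f x)) x :=
    hs.smul hf
  rw [weylDirac, weylDirac, hsf.fderiv, hf.fderiv]
  ext i
  fin_cases i <;>
    simp [pauliDot, xc, Fin.sum_univ_three, EuclideanSpace.inner_single_right] <;>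
    ring

lemma weylDirac_lossYauNumerator (φ : Fin 2 → ℂ) (x : EuclideanSpace ℝ (Fin 3)) :
    weylDirac (lossYauNumerator φ) x = (3 : ℂ) • φ := by
  simp only [weylDirac, fderiv_lossYauNumerator_single, smul_smul, neg_mul, Complex.I_mul_I,
    neg_neg, one_smul, Matrix.mulVec_mulVec, pauli_mul_self, Matrix.one_mulVec,
    Finset.sum_const, Finset.card_univ, Fintype.card_fin]
  rw [← Nat.cast_smul_eq_nsmul ℂ]
  norm_num

lemma weylDirac_lossYauSpinor (x : EuclideanSpace ℝ (Fin 3)) :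
    weylDirac lossYauSpinor x = (3 * (1 + ‖x‖ ^ 2)⁻¹ : ℝ) • lossYauSpinor x := by
  rw [lossYauSpinor_eq, weylDirac_smul (hasFDerivAt_japaneseBracket_inv_pow 3 x)
    (hasFDerivAt_lossYauNumerator phi0 x), weylDirac_lossYauNumerator, xc_smul, pauliDot_smul,
    Matrix.smul_mulVec, pauliDot_mulVec_lossYauNumerator]
  have hr2 : (japaneseBracket x : ℂ) ^ 2 = 1 + (‖x‖ : ℂ) ^ 2 := by
    exact_mod_cast japaneseBracket_sq x
  have hr : (japaneseBracket x : ℂ) ≠ 0 := by exact_mod_cast (japaneseBracket_pos x).ne'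
  ext i
  simp only [lossYauNumerator, Matrix.add_mulVec, Matrix.one_mulVec, Matrix.smul_mulVec,
    ← Complex.coe_smul, Pi.add_apply, Pi.sub_apply, Pi.smul_apply, smul_eq_mul]
  push_cast
  rw [← hr2]
  field_simp
  linear_combination phi0 i * hr2 + phi0 i * (‖x‖ : ℂ) ^ 2 * Complex.I_sq

lemma lossYauA_eq (x : EuclideanSpace ℝ (Fin 3)) :
    lossYauA x = ((3 * ((1 + ‖x‖ ^ 2) ^ 2)⁻¹ : ℝ) : ℂ) • spinDensity (lossYauNumerator phi0 x) := by
  ext j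
  rw [lossYauA, Pi.smul_apply, smul_eq_mul, spinDensity_lossYauNumerator]
  rfl

lemma pauliDot_lossYauA_mulVec (x : EuclideanSpace ℝ (Fin 3)) :
    pauliDot (lossYauA x) *ᵥ lossYauSpinor x = (3 * (1 + ‖x‖ ^ 2)⁻¹ : ℝ) • lossYauSpinor x := by
  rw [lossYauA_eq, pauliDot_smul, lossYauSpinor_eq]
  simp only [Matrix.smul_mulVec, Matrix.mulVec_smul, pauliDot_spinDensity_mulVec,
    star_lossYauNumerator_dotProduct_self]
  rw [show star phi0 ⬝ᵥ phi0 = 1 by simp [phi0, dotProduct], mul_one]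
  simp only [← Complex.coe_smul, smul_smul]
  congr 1
  push_cast
  field_simp

/-- The Loss–Yau spinor is a zero mode of the Weyl–Dirac operator
`σ·(D - A(x))` with the Loss–Yau vector potential: `(σ·D)φ(x) = (σ·A(x))φ(x)` for all
`x ∈ ℝ³`, where `D = -i∇`. -/
theorem lossYau_zero_mode :
    ∀ x : EuclideanSpace ℝ (Fin 3),
      (∑ j, (pauli j).mulVec
          ((-Complex.I) • fderiv ℝ lossYauSpinor x (EuclideanSpace.single j (1 : ℝ))))
        = (∑ j, lossYauA x j • pauli j).mulVec (lossYauSpinor x) :=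
  fun x => (weylDirac_lossYauSpinor x).trans (pauliDot_lossYauA_mulVec x).symm

end
end
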